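/- arXiv:2109.10223 — 13 statements merged into one kernel-verified Lean document; each statement's English description precedes it below -/
import Mathlib

section
/- Let Y be a complex Banach space, I = [0,∞) or I = ℝ, T : Y → Y a bounded linear isomorphism, and F : I → Y a continuous T-uniformly recurrent function. If F is not identically zero, then ‖T⁻¹‖ ≥ 1. -/
set_option maxHeartbeats 2000000 in
/-- If a continuous function `F : I → Y` (with `I = [0,∞)` or `I = ℝ`) is
`T`-uniformly recurrent for a linear isomorphism `T` and `F` is not identically
zero on `I`, then `‖T⁻¹‖ ≥ 1`. -/
theorem stmt_1 {Y : Type*} [NormedAddCommGroup Y] [NormedSpace ℂ Y] [CompleteSpace Y]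
    (T : Y ≃L[ℂ] Y) (I : Set ℝ) (hI : I = Set.Ici (0 : ℝ) ∨ I = Set.univ)
    (F : ℝ → Y) (hF : ContinuousOn F I)
    (τ : ℕ → ℝ) (hτ0 : ∀ k, 0 ≤ τ k)
    (hτ : Filter.Tendsto τ Filter.atTop Filter.atTop)
    (hrec : ∀ ε > (0 : ℝ), ∃ K : ℕ, ∀ k ≥ K, ∀ t ∈ I, ‖F (t + τ k) - T (F t)‖ ≤ ε)
    (hne : ∃ t ∈ I, F t ≠ 0) :
    1 ≤ ‖(T.symm : Y →L[ℂ] Y)‖ := by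
  by_contra hlt
  push_neg at hlt
  set q : ℝ := ‖(T.symm : Y →L[ℂ] Y)‖ with hqdef
  obtain ⟨t₀, ht₀I, ht₀⟩ := hne
  -- membership facts
  have hmem : ∀ t : ℝ, 0 ≤ t → t ∈ I := by
    rcases hI with h | h <;> intro t ht <;> simp [h, ht]
  have hadd : ∀ t ∈ I, ∀ r : ℝ, 0 ≤ r → t + r ∈ I := by
    intro t ht r hr
    rcases hI with h | h
    · rw [h] at ht ⊢; exact add_nonneg ht hr
    · rw [h]; trivial
  have hTnorm : ∀ y : Y, ‖y‖ ≤ q * ‖T y‖ := by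
    intro y
    calc ‖y‖ = ‖(T.symm : Y →L[ℂ] Y) (T y)‖ := by simp
      _ ≤ q * ‖T y‖ := (T.symm : Y →L[ℂ] Y).le_opNorm _
  have ha : 0 < ‖F t₀‖ := norm_pos_iff.mpr ht₀
  set a : ℝ := ‖F t₀‖ with hadef
  have hq0 : 0 < q := by
    by_contra h0
    push_neg at h0
    have h1 := hTnorm (F t₀)
    nlinarith [norm_nonneg (T (F t₀))]
  set ε : ℝ := a * (1 - q) / (2 * q) with hεdef
  have hεpos : 0 < ε := div_pos (mul_pos ha (by linarith)) (by linarith)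
  have hεq : 2 * q * ε = a * (1 - q) := by
    rw [hεdef]; field_simp
  obtain ⟨K, hK⟩ := hrec ε hεpos
  obtain ⟨k₁, hk₁⟩ := Filter.eventually_atTop.mp (hτ.eventually_ge_atTop 1)
  set kst : ℕ := max K k₁ with hkst
  set A : ℝ := τ kst with hAdef
  have hA1 : 1 ≤ A := hk₁ kst (le_max_right _ _)
  have hKst : ∀ t ∈ I, ‖F (t + A) - T (F t)‖ ≤ ε := hK kst (le_max_left _ _)
  -- amplification
  have hrecA : ∀ t ∈ I, ‖F t‖ ≤ q * (‖F (t + A)‖ + ε) := by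
    intro t ht
    have h1 := hKst t ht
    have h2 := hTnorm (F t)
    have h3 := abs_norm_sub_norm_le (F (t + A)) (T (F t))
    have h4 := abs_le.mp (le_trans h3 h1)
    nlinarith [norm_nonneg (F (t + A))]
  -- lower bound : ‖F (t₀ + n A)‖ ≥ a + n ε
  have hlow : ∀ n : ℕ, a + n * ε ≤ ‖F (t₀ + n * A)‖ := by
    intro n
    induction n with
    | zero => simp [hadef]
    | succ n ih =>
      have hsI : t₀ + n * A ∈ I :=
        hadd t₀ ht₀I _ (by positivity)
      have h1 := hrecA _ hsI
      have heq : t₀ + (n + 1 : ℕ) * A = t₀ + n * A + A := by push_cast; ring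
      rw [heq]
      push_cast
      nlinarith [norm_nonneg (F (t₀ + n * A + A)), mul_nonneg (Nat.cast_nonneg n : (0:ℝ) ≤ n) hεpos.le,
        mul_nonneg (mul_nonneg (Nat.cast_nonneg n : (0:ℝ) ≤ n) hεpos.le) (by linarith : (0:ℝ) ≤ 1 - q)]
  -- near-period D
  obtain ⟨k₂, hk₂⟩ := Filter.eventually_atTop.mp (hτ.eventually_ge_atTop (5 * A))
  set l : ℕ := max K k₂ with hldef
  have hl5 : 5 * A ≤ τ l := hk₂ l (le_max_right _ _)
  set D : ℝ := τ l - A with hDdef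
  have hD4 : 4 * A ≤ D := by simp only [hDdef]; linarith
  have hD0 : 0 < D := by linarith
  have hstep : ∀ u ∈ I, ‖F (u + A + D)‖ ≤ ‖F (u + A)‖ + 2 * ε := by
    intro u hu
    have h1 := hKst u hu
    have h2 := hK l (le_max_left _ _) u hu
    have key : F (u + τ l) - F (u + A) = (F (u + τ l) - T (F u)) - (F (u + A) - T (F u)) := by abel
    have h3 : ‖F (u + τ l) - F (u + A)‖ ≤ 2 * ε := by
      rw [key]
      calc ‖(F (u + τ l) - T (F u)) - (F (u + A) - T (F u))‖
          ≤ ‖F (u + τ l) - T (F u)‖ + ‖F (u + A) - T (F u)‖ := norm_sub_le _ _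
        _ ≤ 2 * ε := by linarith
    have heq : u + A + D = u + τ l := by simp only [hDdef]; ring
    rw [heq]
    have h4 := abs_le.mp (le_trans (abs_norm_sub_norm_le (F (u + τ l)) (F (u + A))) h3)
    linarith
  -- iterated near-period
  have hiter : ∀ m : ℕ, ∀ u ∈ I, ‖F (u + A + m * D)‖ ≤ ‖F (u + A)‖ + 2 * ε * m := by
    intro m
    induction m with
    | zero => intro u hu; simp
    | succ m ih =>
      intro u hu
      have huI : u + m * D ∈ I := hadd u hu _ (by positivity)
      have h1 := hstep _ huI
      have h2 := ih u hu
      rw [show u + A + ((m + 1 : ℕ) : ℝ) * D = u + A + (m : ℝ) * D + D from by push_cast; ring]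
      rw [show u + (m : ℝ) * D + A = u + A + (m : ℝ) * D from by ring] at h1
      push_cast
      linarith
  -- bound on compact
  have hJI : Set.Icc A (A + D) ⊆ I := fun x hx => hmem x (by linarith [hx.1])
  obtain ⟨z, hzJ, hzM⟩ := isCompact_Icc.exists_isMaxOn
    (Set.nonempty_Icc.mpr (by linarith)) ((hF.mono hJI).norm)
  set M : ℝ := ‖F z‖ with hMdef
  have hM0 : 0 ≤ M := norm_nonneg _
  -- choose n large
  obtain ⟨n, hn⟩ := exists_nat_gt ((2 * A * M + ε * (|t₀| + A)) / ε + |t₀| + A + 1)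
  have hdivnn : 0 ≤ (2 * A * M + ε * (|t₀| + A)) / ε :=
    div_nonneg (by positivity) hεpos.le
  have hnA : |t₀| + A + 1 < (n : ℝ) := by linarith
  have hnε : 2 * A * M + ε * (|t₀| + A) < ε * n := by
    have h := (div_lt_iff₀ hεpos).mp
      (show (2 * A * M + ε * (|t₀| + A)) / ε < (n : ℝ) by linarith [abs_nonneg t₀])
    linarith
  obtain ⟨s, hsdef⟩ : ∃ s : ℝ, s = t₀ + n * A := ⟨_, rfl⟩
  have hncast : (n : ℝ) ≤ (n : ℝ) * A := by nlinarith [(Nat.cast_nonneg n : (0:ℝ) ≤ n)]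
  have hsA : 0 ≤ s - A := by
    have h := neg_abs_le t₀
    rw [hsdef]
    linarith
  obtain ⟨m, hmdef⟩ : ∃ m : ℕ, m = ⌊(s - A) / D⌋₊ := ⟨_, rfl⟩
  have hm1 : (m : ℝ) * D ≤ s - A := by
    have h := Nat.floor_le (div_nonneg hsA hD0.le)
    rw [← hmdef] at h
    calc (m : ℝ) * D ≤ ((s - A) / D) * D := by nlinarith
      _ = s - A := by field_simp
  have hm2 : s - A < ((m : ℝ) + 1) * D := by
    have h := Nat.lt_floor_add_one ((s - A) / D)
    rw [← hmdef] at h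
    calc s - A = ((s - A) / D) * D := by field_simp
      _ < ((m : ℝ) + 1) * D := by nlinarith
  obtain ⟨u, hudef⟩ : ∃ u : ℝ, u = s - A - m * D := ⟨_, rfl⟩
  have hu0 : 0 ≤ u := by rw [hudef]; linarith
  have huD : u ≤ D := by
    have hex : ((m : ℝ) + 1) * D = m * D + D := by ring
    rw [hudef]; linarith
  have huI : u ∈ I := hmem u hu0
  have hs_eq : s = u + A + m * D := by rw [hudef]; ring
  have hbig := hiter m u huI
  have huAJ : u + A ∈ Set.Icc A (A + D) := ⟨by linarith, by linarith⟩
  have hFM : ‖F (u + A)‖ ≤ M := (isMaxOn_iff.mp hzM) (u + A) huAJ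
  have hcomb : a + n * ε ≤ M + 2 * ε * m := by
    have h := hlow n
    rw [← hsdef, hs_eq] at h
    linarith
  have h4A : 4 * A * (m : ℝ) ≤ t₀ + (n : ℝ) * A - A := by
    rw [hsdef] at hm1
    nlinarith [(Nat.cast_nonneg m : (0:ℝ) ≤ m)]
  nlinarith [mul_le_mul_of_nonneg_left h4A hεpos.le,
    mul_le_mul_of_nonneg_left hcomb (by linarith : (0:ℝ) ≤ 2 * A),
    mul_le_mul_of_nonneg_left (le_abs_self t₀) hεpos.le,
    mul_nonneg (mul_nonneg (by linarith : (0:ℝ) ≤ A - 1) (Nat.cast_nonneg n : (0:ℝ) ≤ n)) hεpos.le,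
    hnε, hM0, ha, hA1, hεpos.le]
end

section
/- Let Y be a Banach space, T ∈ L(Y), and suppose T^l = I for some positive integer l. If F : [0,∞) → Y is continuous and T-almost periodic (i.e., for every ε > 0 the set of τ ≥ 0 with sup_{t≥0} ‖F(t+τ) − TF(t)‖ ≤ ε is relatively dense in [0,∞)), then F is almost periodic in the Bohr sense, meaning that for every ε > 0 the set of τ ≥ 0 with sup_{t≥0} ‖F(t+τ) − F(t)‖ ≤ ε is relatively dense in [0,∞). -/
/-- If `T^l = I` and `F : [0,∞) → Y` is continuous and `T`-almost periodic,
then `F` is Bohr almost periodic. -/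
theorem stmt_3 {Y : Type*} [NormedAddCommGroup Y] [NormedSpace ℂ Y] [CompleteSpace Y]
    (T : Y →L[ℂ] Y) (l : ℕ) (hl : 1 ≤ l) (hT : T ^ l = 1)
    (F : ℝ → Y) (hF : ContinuousOn F (Set.Ici 0))
    (hap : ∀ ε > (0 : ℝ), ∃ L > (0 : ℝ), ∀ x ≥ (0 : ℝ),
      ∃ τ, x ≤ τ ∧ τ ≤ x + L ∧ ∀ t ≥ (0 : ℝ), ‖F (t + τ) - T (F t)‖ ≤ ε) :
    ∀ ε > (0 : ℝ), ∃ L > (0 : ℝ), ∀ x ≥ (0 : ℝ),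
      ∃ τ, x ≤ τ ∧ τ ≤ x + L ∧ ∀ t ≥ (0 : ℝ), ‖F (t + τ) - F t‖ ≤ ε := by
  intro ε hε
  set M : ℝ := (max 1 ‖T‖) ^ l with hM
  have hM1 : (1 : ℝ) ≤ M := one_le_pow₀ (le_max_left _ _)
  have hM0 : (0 : ℝ) < M := lt_of_lt_of_le one_pos hM1
  have hlpos : (0 : ℝ) < l := by exact_mod_cast hl
  set ε' : ℝ := ε / (l * M) with hε'
  have hε'0 : 0 < ε' := div_pos hε (mul_pos hlpos hM0)
  obtain ⟨L, hL, hLP⟩ := hap ε' hε'0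
  -- norm bound for powers of T up to l
  have hTk : ∀ k : ℕ, 1 ≤ k → k ≤ l → ∀ y : Y, ‖(T ^ k) y‖ ≤ M * ‖y‖ := by
    intro k hk1 hkl y
    calc ‖(T ^ k) y‖ ≤ ‖T ^ k‖ * ‖y‖ := (T ^ k).le_opNorm y
      _ ≤ M * ‖y‖ := by
        apply mul_le_mul_of_nonneg_right _ (norm_nonneg y)
        calc ‖T ^ k‖ ≤ ‖T‖ ^ k := norm_pow_le' T hk1
          _ ≤ (max 1 ‖T‖) ^ k := pow_le_pow_left₀ (norm_nonneg T) (le_max_right _ _) k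
          _ ≤ (max 1 ‖T‖) ^ l := pow_le_pow_right₀ (le_max_left _ _) hkl
  -- key induction
  have key : ∀ k : ℕ, 1 ≤ k → k ≤ l → ∀ x ≥ (0 : ℝ),
      ∃ τ, x ≤ τ ∧ τ ≤ x + k * L ∧
        ∀ t ≥ (0 : ℝ), ‖F (t + τ) - (T ^ k) (F t)‖ ≤ k * (M * ε') := by
    intro k
    induction k with
    | zero => omega
    | succ k ih =>
      intro _ hkl x hx
      rcases Nat.eq_zero_or_pos k with hk0 | hk1
      · subst hk0
        obtain ⟨τ, hτ1, hτ2, hτ3⟩ := hLP x hx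
        refine ⟨τ, hτ1, by simpa using hτ2, fun t ht => ?_⟩
        simp only [zero_add, pow_one, Nat.cast_one, Nat.cast_ofNat, one_mul]
        calc ‖F (t + τ) - T (F t)‖ ≤ ε' := hτ3 t ht
          _ ≤ M * ε' := le_mul_of_one_le_left hε'0.le hM1
      · obtain ⟨τ, hτ1, hτ2, hτ3⟩ := ih hk1 (le_trans (Nat.le_succ k) hkl) x hx
        obtain ⟨σ, hσ1, hσ2, hσ3⟩ := hLP 0 le_rfl
        refine ⟨τ + σ, le_trans hτ1 (le_add_of_nonneg_right hσ1), ?_, ?_⟩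
        · push_cast
          nlinarith [hL.le]
        · intro t ht
          have htσ : (0 : ℝ) ≤ t + σ := add_nonneg ht hσ1
          have h1 : ‖F (t + σ + τ) - (T ^ k) (F (t + σ))‖ ≤ k * (M * ε') := hτ3 (t + σ) htσ
          have h2 : ‖F (t + σ) - T (F t)‖ ≤ ε' := by simpa using hσ3 t ht
          have h3 : ‖(T ^ k) (F (t + σ)) - (T ^ k) (T (F t))‖ ≤ M * ε' := by
            rw [← map_sub]
            calc ‖(T ^ k) (F (t + σ) - T (F t))‖ ≤ M * ‖F (t + σ) - T (F t)‖ :=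
                  hTk k hk1 (le_trans (Nat.le_succ k) hkl) _
              _ ≤ M * ε' := mul_le_mul_of_nonneg_left h2 hM0.le
          have heq : (T ^ (k + 1)) (F t) = (T ^ k) (T (F t)) := by
            rw [pow_succ]; rfl
          have harg : t + (τ + σ) = t + σ + τ := by ring
          calc ‖F (t + (τ + σ)) - (T ^ (k + 1)) (F t)‖
              = ‖(F (t + σ + τ) - (T ^ k) (F (t + σ)))
                  + ((T ^ k) (F (t + σ)) - (T ^ k) (T (F t)))‖ := by
                rw [harg, heq]; congr 1; abel
            _ ≤ ‖F (t + σ + τ) - (T ^ k) (F (t + σ))‖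
                  + ‖(T ^ k) (F (t + σ)) - (T ^ k) (T (F t))‖ := norm_add_le _ _
            _ ≤ k * (M * ε') + M * ε' := add_le_add h1 h3
            _ = (k + 1 : ℕ) * (M * ε') := by push_cast; ring
  refine ⟨l * L, mul_pos hlpos hL, fun x hx => ?_⟩
  obtain ⟨τ, hτ1, hτ2, hτ3⟩ := key l hl le_rfl x hx
  refine ⟨τ, hτ1, hτ2, fun t ht => ?_⟩
  have := hτ3 t ht
  rw [hT] at this
  simp only [ContinuousLinearMap.one_apply] at this
  calc ‖F (t + τ) - F t‖ ≤ l * (M * ε') := this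
    _ = ε := by
      rw [hε']
      field_simp
end

section
/- Let Y be a Banach space, I, I′ ⊆ ℝⁿ nonempty with I + I′ ⊆ I and τ + I = I for all τ ∈ I′, and let T : Y → Y be a (single-valued) map. Suppose F : I → Y is Bohr (I′, T)-almost periodic: for every ε > 0 there exists l > 0 such that for each t₀ ∈ I′ there exists τ ∈ B(t₀, l) ∩ I′ with ‖F(t + τ) − T(F(t))‖ ≤ ε for all t ∈ I. Then F is Bohr (I′ − I′, I)-almost periodic: for every ε > 0 there exists l > 0 such that for each s₀ ∈ I′ − I′ there exists σ ∈ B(s₀, 2l) ∩ (I′ − I′) with ‖F(v + σ) − F(v)‖ ≤ ε for all v ∈ I. -/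
open Pointwise

/-- If `τ + I = I` for all `τ ∈ I′` and `F : I → Y` is Bohr `(I′, T)`-almost
periodic, then `F` is Bohr `(I′ − I′, I)`-almost periodic. -/
theorem stmt_5 {n : ℕ} {Y : Type*} [NormedAddCommGroup Y] [NormedSpace ℂ Y] [CompleteSpace Y]
    (I I' : Set (EuclideanSpace ℝ (Fin n)))
    (hI : I.Nonempty) (hI' : I'.Nonempty)
    (hadd : I + I' ⊆ I)
    (htr : ∀ τ ∈ I', (fun t => τ + t) '' I = I)
    (T : Y → Y) (F : EuclideanSpace ℝ (Fin n) → Y) (hF : ContinuousOn F I)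
    (hap : ∀ ε > (0 : ℝ), ∃ l > (0 : ℝ), ∀ t₀ ∈ I',
      ∃ τ ∈ Metric.closedBall t₀ l ∩ I', ∀ t ∈ I, ‖F (t + τ) - T (F t)‖ ≤ ε) :
    ∀ ε > (0 : ℝ), ∃ l > (0 : ℝ), ∀ s₀ ∈ I' - I',
      ∃ σ ∈ Metric.closedBall s₀ (2 * l) ∩ (I' - I'), ∀ v ∈ I, ‖F (v + σ) - F v‖ ≤ ε := by
  intro ε hε
  obtain ⟨l, hl, h⟩ := hap (ε / 2) (by linarith)
  refine ⟨l, hl, ?_⟩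
  rintro s₀ ⟨a, ha, b, hb, rfl⟩
  obtain ⟨τ₁, ⟨hτ₁b, hτ₁⟩, h₁⟩ := h a ha
  obtain ⟨τ₂, ⟨hτ₂b, hτ₂⟩, h₂⟩ := h b hb
  refine ⟨τ₁ - τ₂, ⟨?_, τ₁, hτ₁, τ₂, hτ₂, rfl⟩, ?_⟩
  · rw [Metric.mem_closedBall] at *
    calc dist (τ₁ - τ₂) (a - b) ≤ dist τ₁ a + dist τ₂ b := dist_sub_sub_le _ _ _ _
    _ ≤ l + l := add_le_add hτ₁b hτ₂b
    _ = 2 * l := by ring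
  · intro v hv
    have : v ∈ (fun t => τ₂ + t) '' I := by rw [htr τ₂ hτ₂]; exact hv
    obtain ⟨t, ht, rfl⟩ := this
    have e1 : τ₂ + t + (τ₁ - τ₂) = t + τ₁ := by abel
    have e2 : τ₂ + t = t + τ₂ := by abel
    beta_reduce
    rw [e1, e2]
    calc ‖F (t + τ₁) - F (t + τ₂)‖
        = ‖(F (t + τ₁) - T (F t)) - (F (t + τ₂) - T (F t))‖ := by abel_nf
      _ ≤ ‖F (t + τ₁) - T (F t)‖ + ‖F (t + τ₂) - T (F t)‖ := norm_sub_le _ _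
      _ ≤ ε / 2 + ε / 2 := add_le_add (h₁ t ht) (h₂ t ht)
      _ = ε := by ring
end

section
/- Every c-uniformly recurrent function F : ℝ → Y, where c ∈ ℂ \ {0}, is uniformly recurrent. That is, if there is a sequence τ_k → +∞ with sup_{t∈ℝ} ‖F(t+τ_k) − c F(t)‖ → 0, then there is a sequence σ_k with |σ_k| → +∞ and sup_{t∈ℝ} ‖F(t+σ_k) − F(t)‖ → 0. -/
/-- Every `c`-uniformly recurrent function `F : ℝ → Y` (with `c ≠ 0`) is
uniformly recurrent. -/
theorem stmt_6 {Y : Type*} [NormedAddCommGroup Y] [NormedSpace ℂ Y] [CompleteSpace Y]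
    (F : ℝ → Y) (hF : Continuous F) (c : ℂ) (hc : c ≠ 0)
    (τ : ℕ → ℝ) (hτ0 : ∀ k, 0 ≤ τ k)
    (hτ : Filter.Tendsto τ Filter.atTop Filter.atTop)
    (hrec : ∀ ε > (0 : ℝ), ∃ K : ℕ, ∀ k ≥ K, ∀ t : ℝ, ‖F (t + τ k) - c • F t‖ ≤ ε) :
    ∃ σ : ℕ → ℝ, Filter.Tendsto (fun k => |σ k|) Filter.atTop Filter.atTop ∧
      ∀ ε > (0 : ℝ), ∃ K : ℕ, ∀ k ≥ K, ∀ t : ℝ, ‖F (t + σ k) - F t‖ ≤ ε := by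
  -- For each k, find two c-periods whose difference is ≥ k and whose errors are ≤ 1/(k+1).
  have key : ∀ k : ℕ, ∃ s : ℝ, (k : ℝ) ≤ s ∧
      ∀ t : ℝ, ‖F (t + s) - F t‖ ≤ 2 / (k + 1) := by
    intro k
    have hpos : (0 : ℝ) < 1 / (k + 1) := by positivity
    obtain ⟨K, hK⟩ := hrec (1 / (k + 1)) hpos
    -- find n ≥ K with τ n ≥ τ K + k
    have : ∀ᶠ n in Filter.atTop, τ K + k ≤ τ n := hτ.eventually_ge_atTop _
    obtain ⟨N, hN⟩ := Filter.eventually_atTop.mp this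
    set n := max N K with hndef
    have hnK : K ≤ n := le_max_right _ _
    have hn : τ K + k ≤ τ n := hN _ (le_max_left _ _)
    refine ⟨τ n - τ K, by linarith, fun t => ?_⟩
    have h1 := hK n hnK (t - τ K)
    have h2 := hK K le_rfl (t - τ K)
    have e1 : t + (τ n - τ K) = (t - τ K) + τ n := by ring
    have e2 : t = (t - τ K) + τ K := by ring
    calc ‖F (t + (τ n - τ K)) - F t‖
        = ‖(F ((t - τ K) + τ n) - c • F (t - τ K))
            - (F ((t - τ K) + τ K) - c • F (t - τ K))‖ := by
          rw [e1]; nth_rewrite 2 [e2]; congr 1; abel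
      _ ≤ ‖F ((t - τ K) + τ n) - c • F (t - τ K)‖
            + ‖F ((t - τ K) + τ K) - c • F (t - τ K)‖ := norm_sub_le _ _
      _ ≤ 1 / (k + 1) + 1 / (k + 1) := add_le_add h1 h2
      _ = 2 / (k + 1) := by ring
  choose σ hσge hσbound using key
  refine ⟨σ, ?_, ?_⟩
  · apply Filter.tendsto_atTop_mono (f := fun k : ℕ => (k : ℝ))
    · intro k
      have := hσge k
      have : (k : ℝ) ≤ |σ k| := le_trans this (le_abs_self _)
      simpa using this
    · exact tendsto_natCast_atTop_atTop
  · intro ε hε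
    obtain ⟨K, hK⟩ := exists_nat_gt (2 / ε)
    refine ⟨K, fun k hk t => ?_⟩
    have hk1 : (2 : ℝ) / ε < k + 1 := lt_of_lt_of_le hK (by exact_mod_cast Nat.le_succ_of_le hk)
    have h2 : 2 / ((k : ℝ) + 1) ≤ ε := by
      rw [div_le_iff₀ (by positivity)]
      rw [div_lt_iff₀ hε] at hk1
      nlinarith
    exact le_trans (hσbound k t) h2
end

section
/- Let Y be a Banach space, I, I′ ⊆ ℝⁿ nonempty with I + I′ ⊆ I, and let T ∈ L(Y) be a linear isomorphism. If F : I → Y is (I′, T)-uniformly recurrent, then for each real a > 0: sup_{t∈I} ‖F(t)‖ ≤ sup_{t ∈ I+I′, |t| ≥ a} ‖T⁻¹ F(t)‖. -/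
open Pointwise

/-- Supremum formula: if `F : I → Y` is `(I′, T)`-uniformly recurrent for a
linear isomorphism `T`, then for each `a > 0`,
`sup_{t∈I} ‖F(t)‖ ≤ sup_{t ∈ I+I′, |t| ≥ a} ‖T⁻¹F(t)‖`. -/
theorem stmt_7 {n : ℕ} {Y : Type*} [NormedAddCommGroup Y] [NormedSpace ℂ Y] [CompleteSpace Y]
    (I I' : Set (EuclideanSpace ℝ (Fin n)))
    (hI : I.Nonempty) (hI' : I'.Nonempty) (hadd : I + I' ⊆ I)
    (T : Y ≃L[ℂ] Y) (F : EuclideanSpace ℝ (Fin n) → Y) (hF : ContinuousOn F I)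
    (τ : ℕ → EuclideanSpace ℝ (Fin n)) (hτI' : ∀ k, τ k ∈ I')
    (hτ : Filter.Tendsto (fun k => ‖τ k‖) Filter.atTop Filter.atTop)
    (hrec : ∀ ε > (0 : ℝ), ∃ K : ℕ, ∀ k ≥ K, ∀ t ∈ I, ‖F (t + τ k) - T (F t)‖ ≤ ε) :
    ∀ a > (0 : ℝ), ∀ C : ℝ,
      (∀ t ∈ I + I', a ≤ ‖t‖ → ‖T.symm (F t)‖ ≤ C) → ∀ t ∈ I, ‖F t‖ ≤ C := by
  intro a ha C hC t ht
  apply le_of_forall_pos_le_add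
  intro ε hε
  set M := ‖(T.symm : Y →L[ℂ] Y)‖ with hM
  have hM0 : 0 ≤ M := norm_nonneg _
  have hMp : 0 < M + 1 := by linarith
  have hε' : 0 < ε / (M + 1) := div_pos hε hMp
  obtain ⟨K, hK⟩ := hrec (ε / (M + 1)) hε'
  obtain ⟨K2, hK2⟩ := Filter.eventually_atTop.mp (Filter.tendsto_atTop.mp hτ (a + ‖t‖))
  set k := max K K2 with hk
  have h1 : ‖F (t + τ k) - T (F t)‖ ≤ ε / (M + 1) := hK k (le_max_left _ _) t ht
  have h2 : a + ‖t‖ ≤ ‖τ k‖ := hK2 k (le_max_right _ _)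
  have hmem : t + τ k ∈ I + I' := Set.add_mem_add ht (hτI' k)
  have hnorm : a ≤ ‖t + τ k‖ := by
    have h3 : ‖τ k‖ ≤ ‖t + τ k‖ + ‖t‖ := by
      simpa using norm_sub_le (t + τ k) t
    linarith
  have hb : ‖T.symm (F (t + τ k))‖ ≤ C := hC _ hmem hnorm
  have key : ‖F t‖ ≤ ‖T.symm (F (t + τ k))‖ + M * (ε / (M + 1)) := by
    have h4 : ‖T.symm (T (F t)) - T.symm (F (t + τ k))‖ ≤ M * (ε / (M + 1)) := by
      have := (T.symm : Y →L[ℂ] Y).le_opNorm (T (F t) - F (t + τ k))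
      rw [map_sub] at this
      refine this.trans ?_
      have : ‖T (F t) - F (t + τ k)‖ ≤ ε / (M + 1) := by
        rw [norm_sub_rev]; exact h1
      exact mul_le_mul_of_nonneg_left this hM0
    calc ‖F t‖ = ‖T.symm (T (F t))‖ := by simp
    _ ≤ ‖T.symm (F (t + τ k))‖ + ‖T.symm (T (F t)) - T.symm (F (t + τ k))‖ := by
        exact norm_le_insert' _ _
    _ ≤ ‖T.symm (F (t + τ k))‖ + M * (ε / (M + 1)) := by linarith
  have hfrac : M * (ε / (M + 1)) ≤ ε := by
    rw [mul_div_assoc']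
    rw [div_le_iff₀ hMp]
    nlinarith
  linarith
end

section
/- Let Y be a Banach space, I, I′ ⊆ ℝⁿ nonempty with I + I′ ⊆ I, T ∈ L(Y) a linear isomorphism, and F : I → Y an (I′, T)-uniformly recurrent function. If lim_{|t|→+∞, t ∈ I+I′} F(t) = 0, then F is identically zero on I. -/
open Pointwise

/-- If `F : I → Y` is `(I′, T)`-uniformly recurrent for a linear isomorphism `T`
and `F(t) → 0` as `|t| → ∞` along `I + I′`, then `F ≡ 0` on `I`. -/
theorem stmt_8 {n : ℕ} {Y : Type*} [NormedAddCommGroup Y] [NormedSpace ℂ Y] [CompleteSpace Y]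
    (I I' : Set (EuclideanSpace ℝ (Fin n)))
    (hI : I.Nonempty) (hI' : I'.Nonempty) (hadd : I + I' ⊆ I)
    (T : Y ≃L[ℂ] Y) (F : EuclideanSpace ℝ (Fin n) → Y) (hF : ContinuousOn F I)
    (τ : ℕ → EuclideanSpace ℝ (Fin n)) (hτI' : ∀ k, τ k ∈ I')
    (hτ : Filter.Tendsto (fun k => ‖τ k‖) Filter.atTop Filter.atTop)
    (hrec : ∀ ε > (0 : ℝ), ∃ K : ℕ, ∀ k ≥ K, ∀ t ∈ I, ‖F (t + τ k) - T (F t)‖ ≤ ε)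
    (hdecay : ∀ ε > (0 : ℝ), ∃ M > (0 : ℝ), ∀ t ∈ I + I', M ≤ ‖t‖ → ‖F t‖ ≤ ε) :
    ∀ t ∈ I, F t = 0 := by
  intro t ht
  have key : ∀ ε > (0 : ℝ), ‖T (F t)‖ ≤ ε := by
    intro ε hε
    obtain ⟨M, hM, hMdec⟩ := hdecay (ε / 2) (by linarith)
    obtain ⟨K, hK⟩ := hrec (ε / 2) (by linarith)
    obtain ⟨k, hk1, hk2⟩ := ((hτ.eventually_ge_atTop (M + ‖t‖)).and
      (Filter.eventually_ge_atTop K)).exists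
    have hmem : t + τ k ∈ I + I' := Set.add_mem_add ht (hτI' k)
    have hnorm : M ≤ ‖t + τ k‖ := by
      have := norm_sub_norm_le (τ k) (-t)
      simp only [norm_neg, sub_neg_eq_add] at this
      rw [add_comm] at this
      linarith
    have h1 : ‖F (t + τ k)‖ ≤ ε / 2 := hMdec _ hmem hnorm
    have h2 : ‖F (t + τ k) - T (F t)‖ ≤ ε / 2 := hK k hk2 t ht
    have heq : T (F t) = F (t + τ k) - (F (t + τ k) - T (F t)) := by abel
    calc ‖T (F t)‖ = ‖F (t + τ k) - (F (t + τ k) - T (F t))‖ := congrArg norm heq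
      _ ≤ ‖F (t + τ k)‖ + ‖F (t + τ k) - T (F t)‖ := norm_sub_le _ _
      _ ≤ ε := by linarith
  have h0 : T (F t) = 0 := by
    by_contra h
    have hpos : 0 < ‖T (F t)‖ := norm_pos_iff.mpr h
    linarith [key (‖T (F t)‖ / 2) (by linarith)]
  apply T.injective
  simpa using h0
end

section
/- Let h ∈ L¹(ℝⁿ), let Y be a Banach space, let A ∈ L(Y), and let F : ℝⁿ → Y be a bounded continuous function which is Bohr (I′, A)-almost periodic: for every ε > 0 there exists l > 0 such that for each t₀ ∈ I′ there exists τ ∈ B(t₀, l) ∩ I′ with ‖F(t+τ) − A F(t)‖ ≤ ε for all t ∈ ℝⁿ. Then the convolution (h∗F)(t) = ∫_{ℝⁿ} h(σ) F(t−σ) dσ is well-defined, bounded, continuous, and Bohr (I′, A)-almost periodic; in fact for any (ε,A)-translation τ of F one has ‖(h∗F)(t+τ) − A(h∗F)(t)‖ ≤ ε ‖h‖_{L¹} for all t ∈ ℝⁿ. -/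
open MeasureTheory

/-- Convolution invariance of Bohr `(I′, A)`-almost periodicity: if
`h ∈ L¹(ℝⁿ)` and `F` is bounded, continuous and Bohr `(I′, A)`-almost periodic,
then `h ∗ F` is well-defined, bounded, continuous and Bohr `(I′, A)`-almost
periodic, with the estimate `‖(h∗F)(t+τ) − A(h∗F)(t)‖ ≤ ε‖h‖₁` for any
`(ε, A)`-translation `τ` of `F`. -/
theorem stmt_9 {n : ℕ} {Y : Type*} [NormedAddCommGroup Y] [NormedSpace ℂ Y] [CompleteSpace Y]
    (I' : Set (EuclideanSpace ℝ (Fin n))) (hI' : I'.Nonempty)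
    (h : EuclideanSpace ℝ (Fin n) → ℂ) (hh : MeasureTheory.Integrable h)
    (A : Y →L[ℂ] Y)
    (F : EuclideanSpace ℝ (Fin n) → Y) (hFc : Continuous F)
    (C : ℝ) (hFb : ∀ t, ‖F t‖ ≤ C)
    (hap : ∀ ε > (0 : ℝ), ∃ l > (0 : ℝ), ∀ t₀ ∈ I',
      ∃ τ ∈ Metric.closedBall t₀ l ∩ I', ∀ t, ‖F (t + τ) - A (F t)‖ ≤ ε) :
    (Continuous fun t => ∫ σ, h σ • F (t - σ)) ∧
    (∃ D : ℝ, ∀ t, ‖∫ σ, h σ • F (t - σ)‖ ≤ D) ∧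
    (∀ ε > (0 : ℝ), ∀ τ, (∀ t, ‖F (t + τ) - A (F t)‖ ≤ ε) →
      ∀ t, ‖(∫ σ, h σ • F (t + τ - σ)) - A (∫ σ, h σ • F (t - σ))‖ ≤
        ε * ∫ σ, ‖h σ‖) ∧
    (∀ ε > (0 : ℝ), ∃ l > (0 : ℝ), ∀ t₀ ∈ I', ∃ τ ∈ Metric.closedBall t₀ l ∩ I',
      ∀ t, ‖(∫ σ, h σ • F (t + τ - σ)) - A (∫ σ, h σ • F (t - σ))‖ ≤ ε) := by
  -- integrability of the integrand
  have hint : ∀ t : EuclideanSpace ℝ (Fin n),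
      Integrable (fun σ => h σ • F (t - σ)) := by
    intro t
    refine Integrable.mono' (hh.norm.mul_const C)
      (hh.aestronglyMeasurable.smul
        ((hFc.comp (continuous_const.sub continuous_id)).aestronglyMeasurable))
      (Filter.Eventually.of_forall fun σ => ?_)
    rw [norm_smul]
    exact mul_le_mul_of_nonneg_left (hFb _) (norm_nonneg _)
  -- estimate (third conjunct)
  have hest : ∀ ε > (0 : ℝ), ∀ τ, (∀ t, ‖F (t + τ) - A (F t)‖ ≤ ε) →
      ∀ t, ‖(∫ σ, h σ • F (t + τ - σ)) - A (∫ σ, h σ • F (t - σ))‖ ≤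
        ε * ∫ σ, ‖h σ‖ := by
    intro ε hε τ hτ t
    have hA : A (∫ σ, h σ • F (t - σ)) = ∫ σ, h σ • A (F (t - σ)) := by
      rw [← A.integral_comp_comm (hint t)]
      simp
    rw [hA, ← integral_sub (hint (t + τ)) ?_]
    · have : ∀ σ, h σ • F (t + τ - σ) - h σ • A (F (t - σ))
          = h σ • (F ((t - σ) + τ) - A (F (t - σ))) := by
        intro σ
        rw [smul_sub]
        congr 2
        abel_nf
      calc ‖∫ σ, (h σ • F (t + τ - σ) - h σ • A (F (t - σ)))‖
          ≤ ∫ σ, ‖h σ • F (t + τ - σ) - h σ • A (F (t - σ))‖ :=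
            norm_integral_le_integral_norm _
        _ ≤ ∫ σ, ‖h σ‖ * ε := by
            refine integral_mono_of_nonneg
              (Filter.Eventually.of_forall fun σ => norm_nonneg _)
              (hh.norm.mul_const ε)
              (Filter.Eventually.of_forall fun σ => ?_)
            show ‖h σ • F (t + τ - σ) - h σ • A (F (t - σ))‖ ≤ ‖h σ‖ * ε
            rw [this σ, norm_smul]
            exact mul_le_mul_of_nonneg_left (hτ _) (norm_nonneg _)
        _ = ε * ∫ σ, ‖h σ‖ := by rw [integral_mul_const, mul_comm]
    · refine Integrable.mono' (hh.norm.mul_const (‖A‖ * C))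
        (hh.aestronglyMeasurable.smul
          (A.continuous.comp
            (hFc.comp (continuous_const.sub continuous_id))).aestronglyMeasurable)
        (Filter.Eventually.of_forall fun σ => ?_)
      rw [norm_smul]
      refine mul_le_mul_of_nonneg_left ?_ (norm_nonneg _)
      calc ‖A (F (t - σ))‖ ≤ ‖A‖ * ‖F (t - σ)‖ := A.le_opNorm _
        _ ≤ ‖A‖ * C := mul_le_mul_of_nonneg_left (hFb _) (norm_nonneg _)
  refine ⟨?_, ?_, hest, ?_⟩
  · -- continuity, via mathlib convolution theory
    have hb : BddAbove (Set.range fun x => ‖F x‖) :=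
      ⟨C, by rintro _ ⟨x, rfl⟩; exact hFb x⟩
    have := hb.continuous_convolution_right_of_integrable
      (ContinuousLinearMap.lsmul ℂ ℂ) hh hFc
    exact this
  · -- boundedness
    refine ⟨(∫ σ, ‖h σ‖) * C, fun t => ?_⟩
    calc ‖∫ σ, h σ • F (t - σ)‖ ≤ ∫ σ, ‖h σ • F (t - σ)‖ :=
        norm_integral_le_integral_norm _
      _ ≤ ∫ σ, ‖h σ‖ * C := by
          refine integral_mono_of_nonneg
            (Filter.Eventually.of_forall fun σ => norm_nonneg _)
            (hh.norm.mul_const C)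
            (Filter.Eventually.of_forall fun σ => ?_)
          show ‖h σ • F (t - σ)‖ ≤ ‖h σ‖ * C
          rw [norm_smul]
          exact mul_le_mul_of_nonneg_left (hFb _) (norm_nonneg _)
      _ = (∫ σ, ‖h σ‖) * C := integral_mul_const _ _
  · -- almost periodicity
    intro ε hε
    set M : ℝ := ∫ σ, ‖h σ‖ with hM
    have hM0 : 0 ≤ M := integral_nonneg fun σ => norm_nonneg _
    have hε' : (0 : ℝ) < ε / (M + 1) := div_pos hε (by linarith)
    obtain ⟨l, hl, hl'⟩ := hap _ hε'
    refine ⟨l, hl, fun t₀ ht₀ => ?_⟩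
    obtain ⟨τ, hτmem, hτ⟩ := hl' t₀ ht₀
    refine ⟨τ, hτmem, fun t => ?_⟩
    calc ‖(∫ σ, h σ • F (t + τ - σ)) - A (∫ σ, h σ • F (t - σ))‖
        ≤ (ε / (M + 1)) * M := hest _ hε' τ hτ t
      _ ≤ ε := by
          rw [div_mul_eq_mul_div, div_le_iff₀ (by linarith)]
          nlinarith
end

section
/- Let X be a Banach space, A ∈ L(X), and let (R(t))_{t>0} ⊆ L(X) be a strongly continuous operator family with R(t)A = AR(t) for all t and ∫_{(0,∞)ⁿ} ‖R(t)‖ dt < ∞. If f : ℝⁿ → X is bounded, continuous, and (I′, A)-almost periodic, then the function F(t) := ∫_{(0,∞)ⁿ} R(s) f(t − s) ds is well-defined, bounded, and (I′, A)-almost periodic: for any τ with sup_t ‖f(t+τ) − A f(t)‖ ≤ ε one has sup_t ‖F(t+τ) − A F(t)‖ ≤ ε ∫_{(0,∞)ⁿ} ‖R(s)‖ ds. -/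
open MeasureTheory


/-- Invariance of `(I′, A)`-almost periodicity under the infinite convolution
product `F(t) = ∫_{(0,∞)ⁿ} R(s) f(t−s) ds`. -/
theorem stmt_10 {n : ℕ} {X : Type*} [NormedAddCommGroup X] [NormedSpace ℂ X] [CompleteSpace X]
    (I' : Set (EuclideanSpace ℝ (Fin n))) (hI' : I'.Nonempty)
    (A : X →L[ℂ] X)
    (R : EuclideanSpace ℝ (Fin n) → (X →L[ℂ] X))
    (S : Set (EuclideanSpace ℝ (Fin n))) (hS : S = {s | ∀ i, 0 < s i})
    (hRcont : ∀ x : X, ContinuousOn (fun s => R s x) S)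
    (hRint : MeasureTheory.IntegrableOn (fun s => ‖R s‖) S)
    (hRA : ∀ s, (R s).comp A = A.comp (R s))
    (f : EuclideanSpace ℝ (Fin n) → X) (hfc : Continuous f)
    (C : ℝ) (hfb : ∀ t, ‖f t‖ ≤ C)
    (hap : ∀ ε > (0 : ℝ), ∃ l > (0 : ℝ), ∀ t₀ ∈ I',
      ∃ τ ∈ Metric.closedBall t₀ l ∩ I', ∀ t, ‖f (t + τ) - A (f t)‖ ≤ ε) :
    (∃ D : ℝ, ∀ t, ‖∫ s in S, R s (f (t - s))‖ ≤ D) ∧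
    (∀ ε > (0 : ℝ), ∀ τ, (∀ t, ‖f (t + τ) - A (f t)‖ ≤ ε) →
      ∀ t, ‖(∫ s in S, R s (f (t + τ - s))) - A (∫ s in S, R s (f (t - s)))‖ ≤
        ε * ∫ s in S, ‖R s‖) ∧
    (∀ ε > (0 : ℝ), ∃ l > (0 : ℝ), ∀ t₀ ∈ I', ∃ τ ∈ Metric.closedBall t₀ l ∩ I',
      ∀ t, ‖(∫ s in S, R s (f (t + τ - s))) - A (∫ s in S, R s (f (t - s)))‖ ≤ ε) := by
  have hSopen : IsOpen S := by
    rw [hS]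
    have : {s : EuclideanSpace ℝ (Fin n) | ∀ i, 0 < s i} = ⋂ i, {s | 0 < s i} := by
      ext s; simp
    rw [this]
    exact isOpen_iInter_of_finite fun i =>
      isOpen_lt continuous_const (EuclideanSpace.proj i).continuous
  -- continuity of the integrand
  have hcont : ∀ (g : EuclideanSpace ℝ (Fin n) → X), Continuous g →
      ∀ t, ContinuousOn (fun s => R s (g (t - s))) S := by
    intro g hg t
    intro s₀ hs₀
    obtain ⟨r, hr, hball⟩ := Metric.isOpen_iff.mp hSopen s₀ hs₀
    have hKsub : Metric.closedBall s₀ (r / 2) ⊆ S :=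
      (Metric.closedBall_subset_ball (by linarith)).trans hball
    have hK : IsCompact (Metric.closedBall s₀ (r / 2)) := isCompact_closedBall _ _
    have hbound : ∀ x : X, ∃ M, ∀ s : Metric.closedBall s₀ (r / 2), ‖R (s : _) x‖ ≤ M := by
      intro x
      obtain ⟨M, hM⟩ := hK.exists_bound_of_continuousOn
        ((hRcont x).mono hKsub)
      exact ⟨M, fun s => hM s s.2⟩
    obtain ⟨M, hM⟩ := banach_steinhaus (g := fun s : Metric.closedBall s₀ (r / 2) => R (s : EuclideanSpace ℝ (Fin n))) hbound
    have hM0 : ∀ s ∈ Metric.closedBall s₀ (r / 2), ‖R s‖ ≤ M := fun s hs => hM ⟨s, hs⟩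
    rw [ContinuousWithinAt, tendsto_iff_norm_sub_tendsto_zero]
    apply squeeze_zero'
    · exact Filter.Eventually.of_forall fun s => norm_nonneg _
    · have hev : ∀ᶠ s in nhdsWithin s₀ S,
        ‖R s (g (t - s)) - R s₀ (g (t - s₀))‖ ≤
          M * ‖g (t - s) - g (t - s₀)‖ + ‖R s (g (t - s₀)) - R s₀ (g (t - s₀))‖ := by
        filter_upwards [nhdsWithin_le_nhds (Metric.closedBall_mem_nhds s₀ (by linarith : (0:ℝ) < r/2))] with s hs
        calc ‖R s (g (t - s)) - R s₀ (g (t - s₀))‖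
            ≤ ‖R s (g (t - s)) - R s (g (t - s₀))‖ + ‖R s (g (t - s₀)) - R s₀ (g (t - s₀))‖ :=
              norm_sub_le_norm_sub_add_norm_sub _ _ _
          _ ≤ M * ‖g (t - s) - g (t - s₀)‖ + ‖R s (g (t - s₀)) - R s₀ (g (t - s₀))‖ := by
              gcongr
              calc ‖R s (g (t - s)) - R s (g (t - s₀))‖ = ‖R s (g (t - s) - g (t - s₀))‖ := by
                    rw [map_sub]
                _ ≤ ‖R s‖ * ‖g (t - s) - g (t - s₀)‖ := (R s).le_opNorm _
                _ ≤ M * ‖g (t - s) - g (t - s₀)‖ :=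
                    mul_le_mul_of_nonneg_right (hM0 s hs) (norm_nonneg _)
      exact hev
    · have h1 : Filter.Tendsto (fun s => M * ‖g (t - s) - g (t - s₀)‖)
          (nhdsWithin s₀ S) (nhds 0) := by
        have : Filter.Tendsto (fun s => g (t - s) - g (t - s₀)) (nhdsWithin s₀ S)
            (nhds 0) := by
          have hc : Continuous fun s => g (t - s) - g (t - s₀) :=
            (hg.comp (continuous_const.sub continuous_id)).sub continuous_const
          have := hc.tendsto s₀
          simp only [sub_self] at this
          exact this.mono_left nhdsWithin_le_nhds
        have := (this.norm).const_mul M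
        simpa using this
      have h2 : Filter.Tendsto (fun s => ‖R s (g (t - s₀)) - R s₀ (g (t - s₀))‖)
          (nhdsWithin s₀ S) (nhds 0) := by
        have := (hRcont (g (t - s₀)) s₀ hs₀)
        rw [ContinuousWithinAt, tendsto_iff_norm_sub_tendsto_zero] at this
        exact this
      simpa using h1.add h2
  -- integrability of the integrand
  have hCnn : 0 ≤ C := le_trans (norm_nonneg _) (hfb 0)
  have hint : ∀ (g : EuclideanSpace ℝ (Fin n) → X), Continuous g → ∀ (Cg : ℝ),
      (∀ u, ‖g u‖ ≤ Cg) → ∀ t, IntegrableOn (fun s => R s (g (t - s))) S := by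
    intro g hg Cg hgb t
    apply Integrable.mono' (hRint.mul_const Cg)
    · exact ((hcont g hg t).aestronglyMeasurable hSopen.measurableSet)
    · filter_upwards with s
      calc ‖R s (g (t - s))‖ ≤ ‖R s‖ * ‖g (t - s)‖ := (R s).le_opNorm _
        _ ≤ ‖R s‖ * Cg := mul_le_mul_of_nonneg_left (hgb _) (norm_nonneg _)
  have hintf : ∀ t, IntegrableOn (fun s => R s (f (t - s))) S := hint f hfc C hfb
  have hAfb : ∀ u, ‖A (f u)‖ ≤ ‖A‖ * C := fun u =>
    le_trans (A.le_opNorm _) (mul_le_mul_of_nonneg_left (hfb u) (norm_nonneg _))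
  have hintAf : ∀ t, IntegrableOn (fun s => R s (A (f (t - s))) ) S :=
    hint (fun u => A (f u)) (A.continuous.comp hfc) (‖A‖ * C) hAfb
  have hI0 : (0:ℝ) ≤ ∫ s in S, ‖R s‖ := integral_nonneg fun s => norm_nonneg _
  have key2 : ∀ ε > (0 : ℝ), ∀ τ, (∀ t, ‖f (t + τ) - A (f t)‖ ≤ ε) →
      ∀ t, ‖(∫ s in S, R s (f (t + τ - s))) - A (∫ s in S, R s (f (t - s)))‖ ≤
        ε * ∫ s in S, ‖R s‖ := by
    intro ε hε τ hτ t
    have hA_int : A (∫ s in S, R s (f (t - s))) = ∫ s in S, R s (A (f (t - s))) := by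
      rw [← ContinuousLinearMap.integral_comp_comm A (hintf t)]
      congr 1
      ext s
      exact (ContinuousLinearMap.ext_iff.mp (hRA s) (f (t - s))).symm
    rw [hA_int, ← integral_sub (hint f hfc C hfb (t + τ)) (hintAf t)]
    calc ‖∫ s in S, (R s (f (t + τ - s)) - R s (A (f (t - s))))‖
        ≤ ∫ s in S, ‖R s‖ * ε := by
          apply norm_integral_le_of_norm_le (hRint.mul_const ε)
          filter_upwards with s
          calc ‖R s (f (t + τ - s)) - R s (A (f (t - s)))‖
              = ‖R s (f (t + τ - s) - A (f (t - s)))‖ := by rw [map_sub]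
            _ ≤ ‖R s‖ * ‖f (t + τ - s) - A (f (t - s))‖ := (R s).le_opNorm _
            _ ≤ ‖R s‖ * ε := by
                apply mul_le_mul_of_nonneg_left _ (norm_nonneg _)
                have := hτ (t - s)
                rwa [← add_sub_right_comm] at this
      _ = ε * ∫ s in S, ‖R s‖ := by rw [integral_mul_const, mul_comm]
  refine ⟨⟨(∫ s in S, ‖R s‖) * C, fun t => ?_⟩, key2, ?_⟩
  · calc ‖∫ s in S, R s (f (t - s))‖ ≤ ∫ s in S, ‖R s‖ * C := by
          apply norm_integral_le_of_norm_le (hRint.mul_const C)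
          filter_upwards with s
          calc ‖R s (f (t - s))‖ ≤ ‖R s‖ * ‖f (t - s)‖ := (R s).le_opNorm _
            _ ≤ ‖R s‖ * C := mul_le_mul_of_nonneg_left (hfb _) (norm_nonneg _)
      _ = (∫ s in S, ‖R s‖) * C := integral_mul_const _ _
  · intro ε hε
    set I₀ := ∫ s in S, ‖R s‖ with hI₀def
    have hε' : (0:ℝ) < ε / (I₀ + 1) := div_pos hε (by linarith)
    obtain ⟨l, hl, hlap⟩ := hap (ε / (I₀ + 1)) hε'
    refine ⟨l, hl, fun t₀ ht₀ => ?_⟩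
    obtain ⟨τ, hτmem, hτ⟩ := hlap t₀ ht₀
    refine ⟨τ, hτmem, fun t => ?_⟩
    calc ‖(∫ s in S, R s (f (t + τ - s))) - A (∫ s in S, R s (f (t - s)))‖
        ≤ (ε / (I₀ + 1)) * I₀ := key2 _ hε' τ hτ t
      _ ≤ ε := by
          rw [div_mul_eq_mul_div, div_le_iff₀ (by linarith)]
          nlinarith
end

section
/- Let ω_j ∈ ℝ \ {0} and let ρ_j be binary relations on a Banach space X for j = 1,…,n, with ω_j e_j + I ⊆ I for each j (e_j the standard basis of ℝⁿ). If F : I → X is continuous and (ω_j, ρ_j)_{j∈ℕ_n}-periodic, i.e., F(t + ω_j e_j) ∈ ρ_j(F(t)) for all t ∈ I and all j, and σ : {1,…,n} → {1,…,n} is a permutation, then with ω := Σ_{j=1}^n ω_j e_j we have ω + I ⊆ I and F is (ω, ρ)-periodic, where ρ := ρ_{σ(n)} ∘ ⋯ ∘ ρ_{σ(1)} is the composition of the relations in the order given by σ. -/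
/-- Composition of a list of binary relations, applied left-to-right. -/
def composeAll {X : Type*} (ρs : List (X → X → Prop)) : X → X → Prop :=
  ρs.foldl Relation.Comp Eq

lemma foldl_comp_iff {X : Type*} (rs : List (X → X → Prop)) :
    ∀ (r : X → X → Prop) (a c : X),
      rs.foldl Relation.Comp r a c ↔ ∃ b, r a b ∧ composeAll rs b c := by
  induction rs with
  | nil =>
      intro r a c
      constructor
      · intro h; exact ⟨c, h, rfl⟩
      · rintro ⟨b, h, rfl⟩; exact h
  | cons s rs ih =>
      intro r a c
      simp only [List.foldl_cons]
      rw [ih]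
      constructor
      · rintro ⟨b, ⟨m, hram, hsmb⟩, hc⟩
        refine ⟨m, hram, ?_⟩
        show (rs.foldl Relation.Comp (Relation.Comp Eq s)) m c
        rw [ih]
        exact ⟨b, ⟨m, rfl, hsmb⟩, hc⟩
      · rintro ⟨m, hram, hmc⟩
        have : (rs.foldl Relation.Comp (Relation.Comp Eq s)) m c := hmc
        rw [ih] at this
        obtain ⟨b, ⟨y, hy, hsyb⟩, hc⟩ := this
        subst hy
        exact ⟨b, ⟨m, hram, hsyb⟩, hc⟩

lemma composeAll_cons {X : Type*} (r : X → X → Prop) (rs : List (X → X → Prop)) (a c : X) :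
    composeAll (r :: rs) a c ↔ ∃ b, r a b ∧ composeAll rs b c := by
  unfold composeAll
  simp only [List.foldl_cons]
  rw [foldl_comp_iff]
  constructor
  · rintro ⟨b, ⟨y, hy, hr⟩, hc⟩; subst hy; exact ⟨b, hr, hc⟩
  · rintro ⟨b, hr, hc⟩; exact ⟨b, ⟨a, rfl, hr⟩, hc⟩

/-- If `F : I → X` is `(ω_j, ρ_j)_{j∈ℕ_n}`-periodic and `σ` is a permutation of
`{1,…,n}`, then with `ω = Σ_j ω_j e_j` we have `ω + I ⊆ I` and `F` is
`(ω, ρ)`-periodic, where `ρ = ρ_{σ(n)} ∘ ⋯ ∘ ρ_{σ(1)}`. -/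
theorem stmt_12 {n : ℕ} {X : Type*} [NormedAddCommGroup X] [NormedSpace ℂ X] [CompleteSpace X]
    (ω : Fin n → ℝ) (hω : ∀ j, ω j ≠ 0)
    (I : Set (EuclideanSpace ℝ (Fin n)))
    (hI : ∀ j, ∀ t ∈ I, t + EuclideanSpace.single j (ω j) ∈ I)
    (ρ : Fin n → X → X → Prop)
    (F : EuclideanSpace ℝ (Fin n) → X) (hFc : ContinuousOn F I)
    (hper : ∀ j, ∀ t ∈ I, ρ j (F t) (F (t + EuclideanSpace.single j (ω j))))
    (σ : Equiv.Perm (Fin n)) :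
    (∀ t ∈ I, t + (∑ j, EuclideanSpace.single j (ω j)) ∈ I) ∧
    (∀ t ∈ I, composeAll (List.ofFn fun j => ρ (σ j))
      (F t) (F (t + ∑ j, EuclideanSpace.single j (ω j)))) := by
  -- main induction over an arbitrary list of indices
  have key : ∀ (L : List (Fin n)), ∀ t ∈ I,
      (t + (L.map fun j => EuclideanSpace.single j (ω j)).sum ∈ I) ∧
      composeAll (L.map ρ) (F t)
        (F (t + (L.map fun j => EuclideanSpace.single j (ω j)).sum)) := by
    intro L
    induction L with
    | nil =>
        intro t ht
        simp only [List.map_nil, List.sum_nil, add_zero]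
        exact ⟨ht, rfl⟩
    | cons j L ih =>
        intro t ht
        have ht' := hI j t ht
        obtain ⟨h1, h2⟩ := ih (t + EuclideanSpace.single j (ω j)) ht'
        simp only [List.map_cons, List.sum_cons, ← add_assoc]
        constructor
        · exact h1
        · rw [composeAll_cons]
          exact ⟨F (t + EuclideanSpace.single j (ω j)), hper j t ht, h2⟩
  have hsum : ((List.ofFn σ).map fun j => EuclideanSpace.single j (ω j)).sum
      = ∑ j, EuclideanSpace.single j (ω j) := by
    rw [List.map_ofFn, List.sum_ofFn]
    exact Equiv.sum_comp σ (fun j => EuclideanSpace.single j (ω j))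
  have hmap : (List.ofFn fun j => ρ (σ j)) = (List.ofFn σ).map ρ := by
    rw [List.map_ofFn]; rfl
  constructor
  · intro t ht
    have := (key (List.ofFn σ) t ht).1
    rwa [hsum] at this
  · intro t ht
    have := (key (List.ofFn σ) t ht).2
    rwa [hsum, ← hmap] at this
end

section
/- Let Y be a Banach space, I, I′ ⊆ ℝⁿ nonempty with I + I′ ⊆ I, T : Y → Y a map, and let (F_k) be a sequence of continuous functions I → Y, each Bohr (I′, T)-almost periodic, converging uniformly on I to a function F. Assume T is uniformly continuous on Y. Then F is Bohr (I′, T)-almost periodic: for every ε > 0 there exists l > 0 such that each ball B(t₀, l) ∩ I′ (t₀ ∈ I′) contains a τ with ‖F(t+τ) − T(F(t))‖ ≤ ε for all t ∈ I. -/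
open Pointwise

/-- A uniform limit of Bohr `(I′, T)`-almost periodic functions is Bohr
`(I′, T)`-almost periodic, provided `T` is uniformly continuous. -/
theorem stmt_15 {n : ℕ} {Y : Type*} [NormedAddCommGroup Y] [NormedSpace ℂ Y] [CompleteSpace Y]
    (I I' : Set (EuclideanSpace ℝ (Fin n)))
    (hI : I.Nonempty) (hI' : I'.Nonempty) (hadd : I + I' ⊆ I)
    (T : Y → Y) (hT : UniformContinuous T)
    (Fk : ℕ → EuclideanSpace ℝ (Fin n) → Y) (hFkc : ∀ k, ContinuousOn (Fk k) I)
    (hFkap : ∀ k, ∀ ε > (0 : ℝ), ∃ l > (0 : ℝ), ∀ t₀ ∈ I',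
      ∃ τ ∈ Metric.closedBall t₀ l ∩ I', ∀ t ∈ I, ‖Fk k (t + τ) - T (Fk k t)‖ ≤ ε)
    (F : EuclideanSpace ℝ (Fin n) → Y)
    (hconv : ∀ ε > (0 : ℝ), ∃ K : ℕ, ∀ k ≥ K, ∀ t ∈ I, ‖Fk k t - F t‖ ≤ ε) :
    ∀ ε > (0 : ℝ), ∃ l > (0 : ℝ), ∀ t₀ ∈ I',
      ∃ τ ∈ Metric.closedBall t₀ l ∩ I', ∀ t ∈ I, ‖F (t + τ) - T (F t)‖ ≤ ε := by
  intro ε hε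
  obtain ⟨δ, hδ, hTδ⟩ := Metric.uniformContinuous_iff.mp hT (ε / 3) (by linarith)
  obtain ⟨K, hK⟩ := hconv (min (ε / 3) (δ / 2)) (by positivity)
  obtain ⟨l, hl, hτ⟩ := hFkap K (ε / 3) (by linarith)
  refine ⟨l, hl, fun t₀ ht₀ => ?_⟩
  obtain ⟨τ, hτmem, hτap⟩ := hτ t₀ ht₀
  refine ⟨τ, hτmem, fun t ht => ?_⟩
  have htτ : t + τ ∈ I := hadd (Set.add_mem_add ht hτmem.2)
  have h1 : ‖F (t + τ) - Fk K (t + τ)‖ ≤ ε / 3 := by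
    have := hK K le_rfl (t + τ) htτ
    rw [← norm_neg]; simpa using le_trans this (min_le_left _ _)
  have h2 : ‖Fk K (t + τ) - T (Fk K t)‖ ≤ ε / 3 := hτap t ht
  have h3 : ‖T (Fk K t) - T (F t)‖ ≤ ε / 3 := by
    have hd : dist (Fk K t) (F t) < δ := by
      have := hK K le_rfl t ht
      rw [dist_eq_norm]
      exact lt_of_le_of_lt (le_trans this (min_le_right _ _)) (by linarith)
    have := hTδ hd
    rw [dist_eq_norm] at this
    linarith
  calc ‖F (t + τ) - T (F t)‖
      ≤ ‖F (t + τ) - Fk K (t + τ)‖ + ‖Fk K (t + τ) - T (Fk K t)‖ + ‖T (Fk K t) - T (F t)‖ := by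
        have := norm_add₃_le (a := F (t + τ) - Fk K (t + τ)) (b := Fk K (t + τ) - T (Fk K t))
          (c := T (Fk K t) - T (F t))
        simpa using this
    _ ≤ ε := by linarith
end

section
/- Let k ≥ 1, let A = [a_{ij}] be a nonzero k×k complex matrix, let I = ℝ or I = [0,∞), I′ ⊆ I with I + I′ ⊆ I, and let F = (F₁,…,F_k) : I → ℂᵏ be Bohr (I′, A)-almost periodic. Let λ be a nonzero eigenvalue of the transpose Aᵀ with eigenvector α = (α₁,…,α_k) ≠ 0, and set u(t) := α₁F₁(t) + ⋯ + α_kF_k(t). Then for every ε > 0, every (ε, A)-translation τ of F satisfies |u(t+τ) − λ u(t)| ≤ ε(|α₁| + ⋯ + |α_k|) for all t ∈ I; in particular the scalar function u is Bohr (I′, λ)-almost periodic. -/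
/-- If `F : I → ℂᵏ` is Bohr `(I′, A)`-almost periodic and `α` is an eigenvector
of `Aᵀ` for a nonzero eigenvalue `λ`, then `u = Σ_i α_i F_i` satisfies
`|u(t+τ) − λu(t)| ≤ ε Σ_i |α_i|` for every `(ε, A)`-translation `τ`, and `u` is
Bohr `(I′, λ)`-almost periodic. -/
theorem stmt_16 {k : ℕ} (hk : 1 ≤ k)
    (A : Matrix (Fin k) (Fin k) ℂ) (hA : A ≠ 0)
    (I : Set ℝ) (hI : I = Set.univ ∨ I = Set.Ici (0 : ℝ))
    (I' : Set ℝ) (hI' : I' ⊆ I) (hadd : ∀ t ∈ I, ∀ τ ∈ I', t + τ ∈ I)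
    (F : ℝ → Fin k → ℂ) (hFc : ContinuousOn F I)
    (hap : ∀ ε > (0 : ℝ), ∃ l > (0 : ℝ), ∀ t₀ ∈ I',
      ∃ τ ∈ Metric.closedBall t₀ l ∩ I', ∀ t ∈ I, ∀ i,
        ‖F (t + τ) i - A.mulVec (F t) i‖ ≤ ε)
    (lam : ℂ) (hlam : lam ≠ 0)
    (α : Fin k → ℂ) (hα : α ≠ 0) (heig : Matrix.vecMul α A = lam • α)
    (u : ℝ → ℂ) (hu : ∀ t, u t = ∑ i, α i * F t i) :
    (∀ ε > (0 : ℝ), ∀ τ : ℝ,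
      (∀ t ∈ I, ∀ i, ‖F (t + τ) i - A.mulVec (F t) i‖ ≤ ε) →
      ∀ t ∈ I, ‖u (t + τ) - lam * u t‖ ≤ ε * ∑ i, ‖α i‖) ∧
    (∀ ε > (0 : ℝ), ∃ l > (0 : ℝ), ∀ t₀ ∈ I',
      ∃ τ ∈ Metric.closedBall t₀ l ∩ I', ∀ t ∈ I, ‖u (t + τ) - lam * u t‖ ≤ ε) := by
  have key : ∀ ε > (0 : ℝ), ∀ τ : ℝ,
      (∀ t ∈ I, ∀ i, ‖F (t + τ) i - A.mulVec (F t) i‖ ≤ ε) →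
      ∀ t ∈ I, ‖u (t + τ) - lam * u t‖ ≤ ε * ∑ i, ‖α i‖ := by
    intro ε hε τ htr t ht
    have hlamu : lam * u t = ∑ i, α i * A.mulVec (F t) i := by
      rw [hu]
      have := congrFun heig
      simp only [Matrix.vecMul, dotProduct, Pi.smul_apply, smul_eq_mul] at this
      calc lam * ∑ i, α i * F t i = ∑ j, (lam * α j) * F t j := by
            rw [Finset.mul_sum]; congr 1; ext j; ring
        _ = ∑ j, (∑ i, α i * A i j) * F t j := by
            congr 1; ext j; rw [this j]
        _ = ∑ i, α i * A.mulVec (F t) i := by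
            simp only [Matrix.mulVec, dotProduct, Finset.mul_sum, Finset.sum_mul]
            rw [Finset.sum_comm]
            congr 1; ext i; congr 1; ext j; ring
    have : u (t + τ) - lam * u t = ∑ i, α i * (F (t + τ) i - A.mulVec (F t) i) := by
      rw [hu, hlamu, ← Finset.sum_sub_distrib]
      congr 1; ext i; ring
    rw [this]
    calc ‖∑ i, α i * (F (t + τ) i - A.mulVec (F t) i)‖
        ≤ ∑ i, ‖α i * (F (t + τ) i - A.mulVec (F t) i)‖ := norm_sum_le _ _
      _ ≤ ∑ i, ‖α i‖ * ε := by
          apply Finset.sum_le_sum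
          intro i _
          rw [norm_mul]
          exact mul_le_mul_of_nonneg_left (htr t ht i) (norm_nonneg _)
      _ = ε * ∑ i, ‖α i‖ := by rw [← Finset.sum_mul]; ring
  refine ⟨key, ?_⟩
  intro ε hε
  have hS : (0 : ℝ) < ∑ i, ‖α i‖ := by
    have : ∃ i, α i ≠ 0 := by
      by_contra h
      push_neg at h
      exact hα (funext h)
    obtain ⟨i, hi⟩ := this
    have := Finset.single_le_sum (f := fun i => ‖α i‖)
      (fun j _ => norm_nonneg _) (Finset.mem_univ i)
    have hpos : (0 : ℝ) < ‖α i‖ := norm_pos_iff.mpr hi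
    linarith
  have hε' : 0 < ε / ∑ i, ‖α i‖ := div_pos hε hS
  obtain ⟨l, hl, h⟩ := hap _ hε'
  refine ⟨l, hl, fun t₀ ht₀ => ?_⟩
  obtain ⟨τ, hτ, htr⟩ := h t₀ ht₀
  refine ⟨τ, hτ, fun t ht => ?_⟩
  have := key _ hε' τ htr t ht
  rwa [div_mul_cancel₀ _ (ne_of_gt hS)] at this
end

section
/- Let c ∈ ℂ with |c| ≠ 1 and |c| ≠ 0, I = ℝ or [0,∞). If f : I → ℂ is continuous, bounded, and c-uniformly recurrent (there is a sequence τ_k → +∞ with sup_{t∈I} |f(t+τ_k) − c f(t)| → 0), then f ≡ 0. -/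
/-- If `|c| ∉ {0, 1}` and `f : I → ℂ` is continuous, bounded and `c`-uniformly
recurrent (with `I = ℝ` or `I = [0,∞)`), then `f ≡ 0` on `I`. -/
theorem stmt_17 (c : ℂ) (hc1 : ‖c‖ ≠ 1) (hc0 : c ≠ 0)
    (I : Set ℝ) (hI : I = Set.univ ∨ I = Set.Ici (0 : ℝ))
    (f : ℝ → ℂ) (hfc : ContinuousOn f I)
    (C : ℝ) (hfb : ∀ t ∈ I, ‖f t‖ ≤ C)
    (τ : ℕ → ℝ) (hτ0 : ∀ k, 0 ≤ τ k)
    (hτ : Filter.Tendsto τ Filter.atTop Filter.atTop)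
    (hrec : ∀ ε > (0 : ℝ), ∃ K : ℕ, ∀ k ≥ K, ∀ t ∈ I, ‖f (t + τ k) - c * f t‖ ≤ ε) :
    ∀ t ∈ I, f t = 0 := by
  have hmem : ∀ t ∈ I, ∀ s : ℝ, 0 ≤ s → t + s ∈ I := by
    intro t ht s hs
    rcases hI with h | h <;> subst h
    · trivial
    · exact add_nonneg ht hs
  have ha0 : (0:ℝ) < ‖c‖ := norm_pos_iff.mpr hc0
  intro t ht
  have hC : (0:ℝ) ≤ C := le_trans (norm_nonneg _) (hfb t ht)
  rw [← norm_le_zero_iff]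
  refine le_of_forall_pos_le_add ?_
  intro ε hε
  rcases lt_or_gt_of_ne hc1 with ha | ha
  · -- case ‖c‖ < 1
    have h1c : (0:ℝ) < 1 - ‖c‖ := by linarith
    set ε' := ε * ‖c‖ * (1 - ‖c‖) / 2 with hε'def
    have hε'pos : 0 < ε' := by positivity
    obtain ⟨K, hK⟩ := hrec ε' hε'pos
    have hDnn : (0:ℝ) ≤ ε' / (1 - ‖c‖) := by positivity
    have hD : ε' / (1 - ‖c‖) * (1 - ‖c‖) = ε' := div_mul_cancel₀ _ h1c.ne'
    have key : ∀ m : ℕ, ∀ s ∈ I, ‖f (s + m * τ K)‖ ≤ ‖c‖ ^ m * C + ε' / (1 - ‖c‖) := by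
      intro m
      induction m with
      | zero =>
        intro s hs
        have h0 : s + ((0:ℕ):ℝ) * τ K = s := by norm_num
        rw [h0, pow_zero, one_mul]
        linarith [hfb s hs]
      | succ m ih =>
        intro s hs
        have hsI : s + m * τ K ∈ I := hmem s hs _ (mul_nonneg (Nat.cast_nonneg m) (hτ0 K))
        have h1 := hK K le_rfl _ hsI
        have h2 := ih s hs
        have heq : (s + m * τ K) + τ K = s + ((m:ℕ)+1 : ℕ) * τ K := by push_cast; ring
        have h3 : ‖f (s + ((m:ℕ)+1 : ℕ) * τ K)‖ ≤ ‖c‖ * ‖f (s + m * τ K)‖ + ε' := by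
          rw [← heq]
          have h := norm_sub_le (f ((s + m * τ K) + τ K) - c * f (s + m * τ K)) (- (c * f (s + m * τ K)))
          have heq2 : f ((s + m * τ K) + τ K) - c * f (s + m * τ K) - - (c * f (s + m * τ K))
              = f ((s + m * τ K) + τ K) := by ring
          rw [heq2, norm_neg, norm_mul] at h
          linarith
        rw [pow_succ]
        nlinarith [h3, h2, hD, mul_le_mul_of_nonneg_left h2 ha0.le]
    have main : ∀ m : ℕ, ‖c‖ * ‖f t‖ ≤ ‖c‖ ^ m * C + ε * ‖c‖ := by
      intro m
      obtain ⟨j, hjK, hjτ⟩ : ∃ j, K ≤ j ∧ (m:ℝ) * τ K - t ≤ τ j := by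
        have h1 := hτ.eventually_ge_atTop ((m:ℝ) * τ K - t)
        have h2 := Filter.eventually_ge_atTop K
        obtain ⟨j, hj1, hj2⟩ := (h2.and h1).exists
        exact ⟨j, hj1, hj2⟩
      set s : ℝ := t + τ j - m * τ K with hsdef
      have hsI : s ∈ I := by
        rcases hI with h | h <;> subst h
        · trivial
        · simp only [hsdef, Set.mem_Ici]
          linarith
      have h1 : ‖f (t + τ j)‖ ≤ ‖c‖ ^ m * C + ε' / (1 - ‖c‖) := by
        have h := key m s hsI
        have heq : s + m * τ K = t + τ j := by simp [hsdef]
        rwa [heq] at h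
      have h2 := hK j hjK t ht
      have h3 : ‖c‖ * ‖f t‖ ≤ ‖f (t + τ j)‖ + ε' := by
        have h := norm_sub_le (f (t + τ j)) (f (t + τ j) - c * f t)
        have heq2 : f (t + τ j) - (f (t + τ j) - c * f t) = c * f t := by ring
        rw [heq2, norm_mul] at h
        linarith
      have hDval : ε' / (1 - ‖c‖) = ε * ‖c‖ / 2 := by
        rw [div_eq_iff h1c.ne', hε'def]; ring
      have hε'le : ε' ≤ ε * ‖c‖ / 2 := by rw [hε'def]; nlinarith
      linarith
    have hlim : Filter.Tendsto (fun m : ℕ => ‖c‖ ^ m * C + ε * ‖c‖) Filter.atTop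
        (nhds (0 * C + ε * ‖c‖)) :=
      ((tendsto_pow_atTop_nhds_zero_of_lt_one (le_of_lt ha0) ha).mul_const C).add
        tendsto_const_nhds
    have hfin : ‖c‖ * ‖f t‖ ≤ 0 * C + ε * ‖c‖ := ge_of_tendsto' hlim main
    rw [zero_mul, zero_add] at hfin
    nlinarith [norm_nonneg (f t)]
  · -- case 1 < ‖c‖
    have h1c : (0:ℝ) < ‖c‖ - 1 := by linarith
    set ε' := ε * (‖c‖ - 1) with hε'def
    have hε'pos : 0 < ε' := by positivity
    obtain ⟨K, hK⟩ := hrec ε' hε'pos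
    have hE : ε' / (‖c‖ - 1) * (‖c‖ - 1) = ε' := div_mul_cancel₀ _ h1c.ne'
    have hEnn : (0:ℝ) ≤ ε' / (‖c‖ - 1) := by positivity
    have key : ∀ n : ℕ, ∀ s ∈ I, ‖f s‖ ≤ C / ‖c‖ ^ n + ε' / (‖c‖ - 1) := by
      intro n
      induction n with
      | zero =>
        intro s hs
        rw [pow_zero, div_one]
        linarith [hfb s hs]
      | succ n ih =>
        intro s hs
        have hsI : s + τ K ∈ I := hmem s hs _ (hτ0 K)
        have h1 := hK K le_rfl s hs
        have h2 := ih _ hsI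
        have h3 : ‖c‖ * ‖f s‖ ≤ ‖f (s + τ K)‖ + ε' := by
          have h := norm_sub_le (f (s + τ K)) (f (s + τ K) - c * f s)
          have heq2 : f (s + τ K) - (f (s + τ K) - c * f s) = c * f s := by ring
          rw [heq2, norm_mul] at h
          linarith
        have h4 : ‖c‖ * ‖f s‖ ≤ C / ‖c‖ ^ n + ε' / (‖c‖ - 1) + ε' := by linarith
        have hpown : ‖c‖ ^ n ≠ 0 := (pow_pos ha0 n).ne'
        have hpow2 : ‖c‖ * (C / ‖c‖ ^ (n+1)) = C / ‖c‖ ^ n := by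
          rw [pow_succ, ← div_div, mul_div_cancel₀ _ ha0.ne']
        have hE2 : ‖c‖ * (ε' / (‖c‖ - 1)) = ε' / (‖c‖ - 1) + ε' := by
          linear_combination hE
        rw [← mul_le_mul_iff_right₀ ha0, mul_add, hpow2, hE2]
        linarith
    have hε'eq : ε' / (‖c‖ - 1) = ε := by
      rw [hε'def]; exact mul_div_cancel_right₀ ε h1c.ne'
    have main : ∀ n : ℕ, ‖f t‖ ≤ C / ‖c‖ ^ n + ε := by
      intro n
      have h := key n t ht
      rwa [hε'eq] at h
    have hlim : Filter.Tendsto (fun n : ℕ => C / ‖c‖ ^ n + ε) Filter.atTop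
        (nhds (0 + ε)) := by
      have h1 : Filter.Tendsto (fun n : ℕ => C / ‖c‖ ^ n) Filter.atTop (nhds 0) := by
        simp only [div_eq_mul_inv, ← inv_pow]
        have habs : |(‖c‖)⁻¹| < 1 := by
          rw [abs_of_pos (by positivity)]
          exact inv_lt_one_of_one_lt₀ ha
        simpa using (tendsto_pow_atTop_nhds_zero_of_abs_lt_one habs).const_mul C
      exact h1.add tendsto_const_nhds
    have := ge_of_tendsto' hlim main
    linarith
end

section
/- Let X, Y, Z be Banach spaces, I, I′ ⊆ ℝⁿ nonempty with I + I′ ⊆ I, and T : Y → Y a map. If F : I → Y is Bohr (I′, T)-almost periodic and φ : Y → Z is uniformly continuous on R(F) ∪ T(R(F)) (where R(F) is the range of F), then φ ∘ F : I → Z is Bohr (I′, φ∘T)-almost periodic: for every ε > 0 there exists l > 0 such that each B(t₀,l) ∩ I′ (t₀ ∈ I′) contains τ with ‖φ(F(t+τ)) − φ(T(F(t)))‖_Z ≤ ε for all t ∈ I. -/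
open Pointwise

/-- If `F : I → Y` is Bohr `(I′, T)`-almost periodic and `φ : Y → Z` is
uniformly continuous on `R(F) ∪ T(R(F))`, then `φ ∘ F` is Bohr
`(I′, φ∘T)`-almost periodic. -/
theorem stmt_19 {n : ℕ} {X Y Z : Type*}
    [NormedAddCommGroup X] [NormedSpace ℂ X] [CompleteSpace X]
    [NormedAddCommGroup Y] [NormedSpace ℂ Y] [CompleteSpace Y]
    [NormedAddCommGroup Z] [NormedSpace ℂ Z] [CompleteSpace Z]
    (I I' : Set (EuclideanSpace ℝ (Fin n)))
    (hI : I.Nonempty) (hI' : I'.Nonempty) (hadd : I + I' ⊆ I)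
    (T : Y → Y) (F : EuclideanSpace ℝ (Fin n) → Y) (hFc : ContinuousOn F I)
    (hap : ∀ ε > (0 : ℝ), ∃ l > (0 : ℝ), ∀ t₀ ∈ I',
      ∃ τ ∈ Metric.closedBall t₀ l ∩ I', ∀ t ∈ I, ‖F (t + τ) - T (F t)‖ ≤ ε)
    (φ : Y → Z)
    (hφ : ∀ ε > (0 : ℝ), ∃ δ > (0 : ℝ), ∀ y₁ ∈ F '' I ∪ T '' (F '' I),
      ∀ y₂ ∈ F '' I ∪ T '' (F '' I), ‖y₁ - y₂‖ < δ → ‖φ y₁ - φ y₂‖ < ε) :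
    ∀ ε > (0 : ℝ), ∃ l > (0 : ℝ), ∀ t₀ ∈ I',
      ∃ τ ∈ Metric.closedBall t₀ l ∩ I', ∀ t ∈ I, ‖φ (F (t + τ)) - φ (T (F t))‖ ≤ ε := by
  intro ε hε
  obtain ⟨δ, hδ, hδe⟩ := hφ ε hε
  obtain ⟨l, hl, hle⟩ := hap (δ / 2) (by linarith)
  refine ⟨l, hl, fun t₀ ht₀ => ?_⟩
  obtain ⟨τ, ⟨hτb, hτI'⟩, hτ⟩ := hle t₀ ht₀
  refine ⟨τ, ⟨hτb, hτI'⟩, fun t ht => ?_⟩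
  have h1 : F (t + τ) ∈ F '' I ∪ T '' (F '' I) :=
    Or.inl ⟨t + τ, hadd ⟨t, ht, τ, hτI', rfl⟩, rfl⟩
  have h2 : T (F t) ∈ F '' I ∪ T '' (F '' I) :=
    Or.inr ⟨F t, ⟨t, ht, rfl⟩, rfl⟩
  exact le_of_lt (hδe _ h1 _ h2 (lt_of_le_of_lt (hτ t ht) (by linarith)))
end
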